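/- arXiv:1402.5456 — 3 statements merged into one kernel-verified Lean document; each statement's English description precedes it below -/
import Mathlib

section
/- For every k > 0 and every price p with 0 < p ≤ k/(1 + Egen) (where −1 < Emin ≤ Egen), the unique maximizer of e ↦ k · Real.log (1 + e) + p · (Egen − e) over [Emin, Egen] is e* = Egen; i.e., when the offered price is too low, the RU consumes all of its generation and sells nothing to the shared facility controller. -/
/-- If the offered price is too low, namely `0 < p ≤ k/(1 + Egen)`, then the unique
maximizer of `e ↦ k·ln(1+e) + p·(Egen − e)` over `[Emin, Egen]` is `e* = Egen`:
the RU consumes all of its generation and sells nothing. -/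
theorem ru_low_price_consumes_all (k p Emin Egen : ℝ) (hk : 0 < k) (hp : 0 < p)
    (hEmin : -1 < Emin) (hE : Emin ≤ Egen) (hple : p ≤ k / (1 + Egen)) :
    (∀ x ∈ Set.Icc Emin Egen,
        k * Real.log (1 + x) + p * (Egen - x) ≤
          k * Real.log (1 + Egen) + p * (Egen - Egen)) ∧
    ∀ e ∈ Set.Icc Emin Egen,
      (∀ x ∈ Set.Icc Emin Egen,
          k * Real.log (1 + x) + p * (Egen - x) ≤
            k * Real.log (1 + e) + p * (Egen - e)) →
      e = Egen := by
  have hE1 : (0:ℝ) < 1 + Egen := by linarith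
  have key : ∀ x, Emin ≤ x → x < Egen →
      k * Real.log (1 + x) + p * (Egen - x) < k * Real.log (1 + Egen) := by
    intro x hx hxE
    have hx1 : (0:ℝ) < 1 + x := by linarith
    have hr : (0:ℝ) < (1 + x) / (1 + Egen) := div_pos hx1 hE1
    have hne : (1 + x) / (1 + Egen) ≠ 1 := by
      intro h
      have := (div_eq_one_iff_eq (ne_of_gt hE1)).mp h
      linarith
    have hlog := Real.log_lt_sub_one_of_pos hr hne
    rw [Real.log_div (ne_of_gt hx1) (ne_of_gt hE1)] at hlog
    -- log(1+x) - log(1+Egen) < (1+x)/(1+Egen) - 1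
    have h2 : k * (Real.log (1 + x) - Real.log (1 + Egen)) <
        k * ((1 + x) / (1 + Egen) - 1) := by
      exact (mul_lt_mul_iff_right₀ hk).mpr hlog
    have h3 : p * (Egen - x) ≤ k / (1 + Egen) * (Egen - x) := by
      apply mul_le_mul_of_nonneg_right hple (by linarith)
    have h4 : k * ((1 + x) / (1 + Egen) - 1) = -(k / (1 + Egen) * (Egen - x)) := by
      field_simp
      ring
    rw [h4] at h2
    linarith
  constructor
  · intro x hx
    rcases eq_or_lt_of_le hx.2 with h | h
    · subst h; simp
    · have := key x hx.1 h
      simp only [sub_self, mul_zero, add_zero]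
      linarith
  · intro e he hmax
    by_contra hne
    have hlt : e < Egen := lt_of_le_of_ne he.2 hne
    have := hmax Egen ⟨hE, le_refl _⟩
    have := key e he.1 hlt
    simp only [sub_self, mul_zero, add_zero] at *
    linarith
end

section
/- Let N be a finite index set of RUs with parameters kₙ > 0 and generation levels Eₙ for n ∈ N, let pg > 0 be the grid selling price and Ereq the SFC's energy requirement, and suppose Σₙ kₙ > 0. Then the reduced SFC cost function J̃(p) = p · Σₙ (Eₙ − (kₙ/p − 1)) + (Ereq − Σₙ (Eₙ − (kₙ/p − 1))) · pg is strictly convex on (0, ∞). -/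
/-!
Summing the best responses gives `Σₙ (Eₙ − (kₙ/p − 1)) = S − K/p` with `K = Σₙ kₙ` and
`S = Σₙ (Eₙ + 1)`, so the cost is `K·pg/p + S·p + const`: a positive multiple of `1/p` plus an
affine function of `p`.
-/

open Set

theorem StrictConvexOn.const_mul {𝕜 E : Type*} [Field 𝕜] [LinearOrder 𝕜] [IsStrictOrderedRing 𝕜]
    [AddCommMonoid E] [Module 𝕜 E] {s : Set E} {f : E → 𝕜} {c : 𝕜}
    (hf : StrictConvexOn 𝕜 s f) (hc : 0 < c) : StrictConvexOn 𝕜 s fun x => c * f x := by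
  refine ⟨hf.1, fun x hx y hy hxy a b ha hb hab => ?_⟩
  have h := mul_lt_mul_of_pos_left (hf.2 hx hy hxy ha hb hab) hc
  simp only [smul_eq_mul] at h ⊢
  linarith

theorem strictConvexOn_const_div_Ioi {c : ℝ} (hc : 0 < c) :
    StrictConvexOn ℝ (Ioi 0) fun x : ℝ => c / x :=
  ((strictConvexOn_zpow (m := -1) (by decide) (by decide)).const_mul hc).congr fun x _ => by
    simp [div_eq_mul_inv]

theorem sum_sub_div_sub_one {ι : Type*} (N : Finset ι) (k E : ι → ℝ) (p : ℝ) :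
    ∑ n ∈ N, (E n - (k n / p - 1)) = ∑ n ∈ N, (E n + 1) - (∑ n ∈ N, k n) / p := by
  rw [Finset.sum_div, ← Finset.sum_sub_distrib]
  exact Finset.sum_congr rfl fun n _ => by ring

theorem sfc_cost_strictConvexOn_general {ι : Type*} (N : Finset ι) (k E : ι → ℝ)
    (pg : ℝ) (hpg : 0 < pg) (Ereq : ℝ)
    (hksum : 0 < ∑ n ∈ N, k n) :
    StrictConvexOn ℝ (Set.Ioi 0)
      (fun p : ℝ => p * ∑ n ∈ N, (E n - (k n / p - 1)) +
        (Ereq - ∑ n ∈ N, (E n - (k n / p - 1))) * pg) := by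
  simp only [sum_sub_div_sub_one]
  set K := ∑ n ∈ N, k n
  set S := ∑ n ∈ N, (E n + 1)
  have hinv : StrictConvexOn ℝ (Ioi 0) fun p : ℝ => K * pg / p :=
    strictConvexOn_const_div_Ioi (mul_pos hksum hpg)
  have haffine : ConvexOn ℝ (Ioi 0) fun p : ℝ => S * p + ((Ereq - S) * pg - K) :=
    ((LinearMap.lsmul ℝ ℝ S).convexOn (convex_Ioi 0)).add_const _
  refine (hinv.add_convexOn haffine).congr fun p (hp : 0 < p) => ?_
  simp only [Pi.add_apply]
  field_simp
  ring

/-- The reduced SFC cost function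
`J̃(p) = p·Σₙ(Eₙ − (kₙ/p − 1)) + (Ereq − Σₙ(Eₙ − (kₙ/p − 1)))·pg`
is strictly convex on `(0, ∞)` when every `kₙ > 0`, `pg > 0` and `Σₙ kₙ > 0`. -/
theorem sfc_cost_strictConvexOn {ι : Type*} (N : Finset ι) (k E : ι → ℝ)
    (hk : ∀ n ∈ N, 0 < k n) (pg : ℝ) (hpg : 0 < pg) (Ereq : ℝ)
    (hksum : 0 < ∑ n ∈ N, k n) :
    StrictConvexOn ℝ (Set.Ioi 0)
      (fun p : ℝ => p * ∑ n ∈ N, (E n - (k n / p - 1)) +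
        (Ereq - ∑ n ∈ N, (E n - (k n / p - 1))) * pg) :=
  sfc_cost_strictConvexOn_general N k E pg hpg Ereq hksum
end

section
/- Let N be a finite index set of RUs with parameters kₙ > 0 and generation levels Eₙ, let pg > 0, Ereq ∈ ℝ, Σₙ kₙ > 0, and let 0 < pb ≤ ps be the grid buying and selling prices. Then there exists a unique p* ∈ [pb, ps] minimizing J̃(p) = p · Σₙ (Eₙ − (kₙ/p − 1)) + (Ereq − Σₙ (Eₙ − (kₙ/p − 1))) · pg over the interval [pb, ps]. -/
private lemma strictConvexOn_const_mul {c : ℝ} (hc : 0 < c) {s : Set ℝ} {f : ℝ → ℝ}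
    (hf : StrictConvexOn ℝ s f) : StrictConvexOn ℝ s (fun x => c * f x) := by
  refine ⟨hf.1, fun x hx y hy hxy a b ha hb hab => ?_⟩
  have h := hf.2 hx hy hxy ha hb hab
  simp only [smul_eq_mul] at h ⊢
  nlinarith [mul_lt_mul_of_pos_left h hc]

private lemma strictConvexOn_add_affine {s : Set ℝ} (hs : Convex ℝ s) {f : ℝ → ℝ}
    (hf : StrictConvexOn ℝ s f) (A B : ℝ) :
    StrictConvexOn ℝ s (fun x => A * x + B + f x) := by
  refine ⟨hs, fun x hx y hy hxy a b ha hb hab => ?_⟩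
  have h := hf.2 hx hy hxy ha hb hab
  simp only [smul_eq_mul] at h ⊢
  have hb' : b = 1 - a := by linarith
  have heq : A * (a * x + b * y) + B = a * (A * x + B) + b * (A * y + B) := by
    rw [hb']; ring
  linarith

/-- There exists a unique minimizer `p* ∈ [pb, ps]` of the reduced SFC cost function
`J̃(p) = p·Σₙ(Eₙ − (kₙ/p − 1)) + (Ereq − Σₙ(Eₙ − (kₙ/p − 1)))·pg`. -/
theorem sfc_unique_optimal_price {ι : Type*} (N : Finset ι) (k E : ι → ℝ)
    (hk : ∀ n ∈ N, 0 < k n) (pg : ℝ) (hpg : 0 < pg) (Ereq : ℝ)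
    (hksum : 0 < ∑ n ∈ N, k n) (pb ps : ℝ) (hpb : 0 < pb) (hbs : pb ≤ ps) :
    ∃! pstar : ℝ, pstar ∈ Set.Icc pb ps ∧
      ∀ p ∈ Set.Icc pb ps,
        pstar * ∑ n ∈ N, (E n - (k n / pstar - 1)) +
            (Ereq - ∑ n ∈ N, (E n - (k n / pstar - 1))) * pg ≤
          p * ∑ n ∈ N, (E n - (k n / p - 1)) +
            (Ereq - ∑ n ∈ N, (E n - (k n / p - 1))) * pg := by
  classical
  set K : ℝ := ∑ n ∈ N, k n with hK
  set S : ℝ := (∑ n ∈ N, E n) + N.card with hS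
  set C : ℝ := Ereq * pg - S * pg - K with hC
  -- the cost function
  set J : ℝ → ℝ := fun p =>
    p * ∑ n ∈ N, (E n - (k n / p - 1)) +
      (Ereq - ∑ n ∈ N, (E n - (k n / p - 1))) * pg with hJ
  set g : ℝ → ℝ := fun p => S * p + C + K * pg * p⁻¹ with hg
  have hsum : ∀ p : ℝ, p ≠ 0 → ∑ n ∈ N, (E n - (k n / p - 1)) = S - K / p := by
    intro p hp
    rw [hS, hK]
    rw [Finset.sum_sub_distrib, Finset.sum_sub_distrib, ← Finset.sum_div]
    simp [Finset.sum_const]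
    ring
  have hIcc_pos : ∀ p ∈ Set.Icc pb ps, (0:ℝ) < p := fun p hp => lt_of_lt_of_le hpb hp.1
  have hJg : ∀ p ∈ Set.Icc pb ps, J p = g p := by
    intro p hp
    have hp0 : p ≠ 0 := (hIcc_pos p hp).ne'
    rw [hJ, hg]
    simp only [hsum p hp0, hC]
    field_simp
    ring
  -- strict convexity of g on Icc
  have hinv : StrictConvexOn ℝ (Set.Icc pb ps) (fun x : ℝ => x⁻¹) := by
    have h := strictConvexOn_zpow (m := -1) (by norm_num) (by norm_num)
    have h' : StrictConvexOn ℝ (Set.Ioi (0:ℝ)) (fun x : ℝ => x⁻¹) := by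
      convert h using 2 with x
      simp
    exact h'.subset (fun x hx => hIcc_pos x hx) (convex_Icc _ _)
  have hKpg : 0 < K * pg := mul_pos hksum hpg
  have hgconv : StrictConvexOn ℝ (Set.Icc pb ps) g :=
    strictConvexOn_add_affine (convex_Icc _ _) (strictConvexOn_const_mul hKpg hinv) S C
  -- continuity of g on Icc
  have hgcont : ContinuousOn g (Set.Icc pb ps) := by
    apply ContinuousOn.add
    · fun_prop
    · exact ContinuousOn.mul continuousOn_const
        (ContinuousOn.inv₀ continuousOn_id fun x hx => (hIcc_pos x hx).ne')
  -- existence of a minimizer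
  have hne : (Set.Icc pb ps).Nonempty := Set.nonempty_Icc.2 hbs
  obtain ⟨pstar, hpstar, hmin⟩ := (isCompact_Icc).exists_isMinOn hne hgcont
  refine ⟨pstar, ⟨hpstar, fun p hp => ?_⟩, ?_⟩
  · have := hmin hp
    simp only [Set.mem_setOf_eq] at this
    calc J pstar = g pstar := hJg pstar hpstar
      _ ≤ g p := this
      _ = J p := (hJg p hp).symm
  · rintro q ⟨hq, hqmin⟩
    have hqmin' : IsMinOn g (Set.Icc pb ps) q := by
      intro p hp
      simp only [Set.mem_setOf_eq]
      calc g q = J q := (hJg q hq).symm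
        _ ≤ J p := hqmin p hp
        _ = g p := hJg p hp
    exact hgconv.eq_of_isMinOn hqmin' hmin hq hpstar
end
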